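/- Overcoverage upper bound: in the setting of the pretrained coverage theorem, assume the scores S_{L+1},...,S_{n+1} are almost surely distinct. Then P(S_{n+1} ≤ Quantile_{(1-α)(1+1/(n-L))}(S_{L+1},...,S_n)) ≤ ⌈(1-α)(n-L+1)⌉/(n-L+1) + min_{τ ∈ {0,...,n-L}} { τ/(n-L+1) + Ψ̄_τ(S) }. -/

import Mathlib

/-!
On the coverage event the test score `S_{N+1}` has rank at most `r = ⌈(1-α)(N+1)⌉` among all
`N + 1` scores. For each `k`, replacing `Δ⁰_{k,τ}(S)` by `Δ¹_{k,τ}(S)` costs at most `Ψ_{k,τ}` in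
probability and moves the score `S_k` into the last position; since only `τ` scores were deleted,
the event becomes "`S_k` has rank at most `r + τ`". Distinct scores have distinct ranks, so at most
`r + τ` of them have rank `≤ r + τ`; summing over `k` gives `(N+1)·P ≤ r + τ + ∑_k Ψ_{k,τ}`.
-/

open MeasureTheory
open scoped ENNReal

/-- The `j`-th order statistic (1-indexed) of a finite real vector. -/
noncomputable def orderStat {m : ℕ} (v : Fin m → ℝ) (j : ℕ) : ℝ :=
  ((List.ofFn v).mergeSort (fun x y => x ≤ y)).getD (j - 1) 0

/-- `Quantile b v` is the `⌈b·m⌉`-th order statistic of `v ∈ ℝ^m`, with the conventions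
`Quantile b v = ⊤` if `b > 1` and `Quantile b v = ⊥` if `b ≤ 0`. -/
noncomputable def Quantile {m : ℕ} (b : ℝ) (v : Fin m → ℝ) : EReal :=
  if b > 1 then ⊤ else if b ≤ 0 then ⊥ else ((orderStat v ⌈b * m⌉.toNat : ℝ) : EReal)

/-- The deletion operator `Δ⁰_{k,τ}` of the paper (with `k` and `τ` counts of entries). -/
def delta0 {α : Type*} (m k τ : ℕ) (w : Fin m → α) : Fin (m - τ) → α :=
  fun i =>
    if i.val < m - τ - k then w ⟨i.val, by have := i.isLt; omega⟩
    else w ⟨i.val + τ, by have := i.isLt; omega⟩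

/-- The deletion operator `Δ¹_{k,τ}` of the paper. -/
def delta1 {α : Type*} (m k τ : ℕ) (w : Fin m → α) : Fin (m - τ) → α :=
  fun i =>
    if h : k + τ < m then
      if h2 : i.val < m - τ - k then w ⟨i.val + k + τ, by have := i.isLt; omega⟩
      else w ⟨i.val - (m - τ - k), by have := i.isLt; omega⟩
    else w ⟨(i.val + k + τ - m) % m, Nat.mod_lt _ (by have := i.isLt; omega)⟩

/-- Total variation distance between the laws of two random elements `U, V` under `P`. -/
noncomputable def dTV {Ω γ : Type*} [MeasurableSpace Ω] [MeasurableSpace γ]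
    (P : Measure Ω) (U V : Ω → γ) : ℝ :=
  ⨆ E : {E : Set γ // MeasurableSet E}, |(P (U ⁻¹' E.1)).toReal - (P (V ⁻¹' E.1)).toReal|

/-- The switch coefficient `Ψ_{k,τ}(W)` of a random vector `W` of length `m`. -/
noncomputable def switchCoef {Ω α : Type*} [MeasurableSpace Ω] [MeasurableSpace α]
    (P : Measure Ω) {m : ℕ} (W : Ω → Fin m → α) (k τ : ℕ) : ℝ :=
  dTV P (fun ω => delta0 m k τ (W ω)) (fun ω => delta1 m k τ (W ω))

/-- The averaged switch coefficient `Ψ̄_τ(W) = (1/m) ∑_{k=1}^m Ψ_{k,τ}(W)`. -/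
noncomputable def avgSwitchCoef {Ω α : Type*} [MeasurableSpace Ω] [MeasurableSpace α]
    (P : Measure Ω) {m : ℕ} (W : Ω → Fin m → α) (τ : ℕ) : ℝ :=
  (∑ k ∈ Finset.Icc 1 m, switchCoef P W k τ) / m

/-- Stationarity of a time series `Z = (Z_1,…,Z_{n+1})`. -/
def Stationary {Ω α : Type*} [MeasurableSpace Ω] [MeasurableSpace α]
    (P : Measure Ω) {n : ℕ} (Z : Ω → Fin (n + 1) → α) : Prop :=
  ∀ (ℓ i : ℕ) (h : i + ℓ ≤ n + 1),
    Measure.map (fun ω (j : Fin ℓ) => Z ω ⟨i + j.val, by have := j.isLt; omega⟩) P =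
      Measure.map (fun ω (j : Fin ℓ) => Z ω ⟨j.val, by have := j.isLt; omega⟩) P

/-- Exchangeability of a random vector. -/
def Exchangeable {Ω α : Type*} [MeasurableSpace Ω] [MeasurableSpace α]
    (P : Measure Ω) {n : ℕ} (Z : Ω → Fin (n + 1) → α) : Prop :=
  ∀ σ : Equiv.Perm (Fin (n + 1)),
    Measure.map (fun ω => Z ω ∘ σ) P = Measure.map Z P

/-- The β-mixing coefficient with lag `τ` of `Z`, defined via an independent copy `Z'`. -/
noncomputable def betaMix {Ω α : Type*} [MeasurableSpace Ω] [MeasurableSpace α]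
    (P : Measure Ω) (n : ℕ) (Z Z' : Ω → Fin (n + 1) → α) (τ : ℕ) : ℝ :=
  ⨆ k : Fin (n - τ),
    dTV P
      (fun ω (i : Fin (n + 1 - τ)) =>
        if i.val < k.val + 1 then Z ω ⟨i.val, by have := i.isLt; omega⟩
        else Z ω ⟨i.val + τ, by have := i.isLt; omega⟩)
      (fun ω (i : Fin (n + 1 - τ)) =>
        if i.val < k.val + 1 then Z ω ⟨i.val, by have := i.isLt; omega⟩
        else Z' ω ⟨i.val + τ, by have := i.isLt; omega⟩)

open Finset

section Deletion

variable {α : Type*} (m k τ : ℕ)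

lemma delta0_eq_comp (w : Fin m → α) : delta0 m k τ w = w ∘ delta0 m k τ id := by
  funext i
  simp only [delta0, Function.comp_apply, id]
  split_ifs <;> rfl

lemma delta1_eq_comp (w : Fin m → α) : delta1 m k τ w = w ∘ delta1 m k τ id := by
  funext i
  simp only [delta1, Function.comp_apply, id]
  split_ifs <;> rfl

lemma delta0_id_injective : Function.Injective (delta0 m k τ (id : Fin m → Fin m)) := by
  intro i j hij
  have := i.isLt
  have := j.isLt
  simp only [delta0, id, Fin.ext_iff] at hij ⊢
  split_ifs at hij <;> simp only at hij <;> omega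

lemma delta1_id_injective (hk : k ≤ m) :
    Function.Injective (delta1 m k τ (id : Fin m → Fin m)) := by
  intro i j hij
  have := i.isLt
  have := j.isLt
  simp only [delta1, id, Fin.ext_iff] at hij ⊢
  split_ifs at hij <;> simp only at hij
  all_goals first
    | omega
    | rw [Nat.mod_eq_of_lt (by omega), Nat.mod_eq_of_lt (by omega)] at hij; omega

variable {m k τ}

lemma delta0_apply_last (w : Fin m → α) (hk : 1 ≤ k) (hτ : τ < m) :
    delta0 m k τ w ⟨m - τ - 1, by omega⟩ = w ⟨m - 1, by omega⟩ := by
  simp only [delta0]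
  rw [if_neg (by omega)]
  congr 2
  omega

lemma delta1_apply_last (w : Fin m → α) (hk : 1 ≤ k) (hkm : k ≤ m) (hτ : τ < m) :
    delta1 m k τ w ⟨m - τ - 1, by omega⟩ = w ⟨k - 1, by omega⟩ := by
  simp only [delta1]
  split_ifs with h h'
  · omega
  · congr 2
    omega
  · congr 2
    rw [Nat.mod_eq_of_lt (by omega)]
    omega

end Deletion

section Rank

variable {β : Type*} [LinearOrder β] {m : ℕ}

def rankOf (w : Fin m → β) (j : Fin m) : ℕ := #{i | w i ≤ w j}

lemma rankOf_pos (w : Fin m → β) (j : Fin m) : 0 < rankOf w j :=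
  card_pos.mpr ⟨j, by simp⟩

lemma rankOf_lt_rankOf {w : Fin m → β} {j j' : Fin m} (h : w j < w j') :
    rankOf w j < rankOf w j' := by
  refine card_lt_card ⟨fun i hi => ?_, fun hsub => ?_⟩
  · simp only [mem_filter, mem_univ, true_and] at hi ⊢
    exact hi.trans h.le
  · have := hsub (by simp : j' ∈ ({i | w i ≤ w j'} : Finset (Fin m)))
    simp only [mem_filter, mem_univ, true_and] at this
    exact this.not_gt h

lemma rankOf_injective {w : Fin m → β} (hw : Function.Injective w) :
    Function.Injective (rankOf w) := by
  intro j j' h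
  by_contra hne
  rcases (hw.ne hne).lt_or_gt with hlt | hgt
  · exact (rankOf_lt_rankOf hlt).ne h
  · exact (rankOf_lt_rankOf hgt).ne' h

lemma card_filter_rankOf_le {w : Fin m → β} (hw : Function.Injective w) (t : ℕ) :
    #{j | rankOf w j ≤ t} ≤ t := by
  calc #{j | rankOf w j ≤ t} ≤ #(Icc 1 t) :=
        card_le_card_of_injOn (rankOf w)
          (fun j hj => by simpa using ⟨rankOf_pos w j, (mem_filter.mp hj).2⟩)
          (rankOf_injective hw).injOn
    _ = t := by simp

lemma rankOf_comp_le {p : ℕ} {ι : Fin p → Fin m} (hι : Function.Injective ι) (w : Fin m → β)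
    (i : Fin p) : rankOf (w ∘ ι) i ≤ rankOf w (ι i) :=
  card_le_card_of_injOn ι (fun i' hi' => by simpa using hi') hι.injOn

lemma rankOf_le_rankOf_comp_add {p : ℕ} {ι : Fin p → Fin m} (hι : Function.Injective ι)
    (w : Fin m → β) (i : Fin p) : rankOf w (ι i) ≤ rankOf (w ∘ ι) i + (m - p) := by
  let e : Fin p ↪ Fin m := ⟨ι, hι⟩
  have hsplit : ({c | w c ≤ w (ι i)} : Finset (Fin m)) ⊆
      (univ.map e).filter (fun c => w c ≤ w (ι i)) ∪ (univ.map e)ᶜ := by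
    intro c hc
    by_cases hce : c ∈ univ.map e <;> simp_all
  calc rankOf w (ι i) ≤ #((univ.map e).filter (fun c => w c ≤ w (ι i))) + #(univ.map e)ᶜ :=
        (card_le_card hsplit).trans (card_union_le _ _)
    _ = _ := by rw [filter_map, card_map, card_compl, card_map, card_univ]; simp [rankOf, e]

end Rank

lemma measurableSet_rankOf_le {m : ℕ} (j : Fin m) (t : ℕ) :
    MeasurableSet {w : Fin m → ℝ | rankOf w j ≤ t} := by
  have hrank : (fun w : Fin m → ℝ => rankOf w j) = fun w => ∑ i, if w i ≤ w j then 1 else 0 := by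
    funext w
    simp [rankOf, sum_boole]
  have hmeas : Measurable fun w : Fin m → ℝ => rankOf w j := by
    rw [hrank]
    exact Finset.measurable_sum _ fun i _ => Measurable.ite
      (measurableSet_le (measurable_pi_apply i) (measurable_pi_apply j)) measurable_const
      measurable_const
  exact measurableSet_le hmeas measurable_const

lemma countP_lt_le_of_le_getElem {β : Type*} [LinearOrder β] {l : List β} (hl : l.Pairwise (· ≤ ·))
    {i : ℕ} (hi : i < l.length) {x : β} (hx : x ≤ l[i]) : l.countP (· < x) ≤ i := by
  have hdrop : (l.drop i).countP (· < x) = 0 := by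
    have hd : l.drop i = l[i] :: l.drop (i + 1) := List.drop_eq_getElem_cons hi
    have hs : (l[i] :: l.drop (i + 1)).Pairwise (· ≤ ·) := hd ▸ hl.drop
    rw [List.countP_eq_zero, hd]
    intro y hy
    simp only [decide_eq_true_eq, not_lt]
    rcases List.mem_cons.mp hy with rfl | hy
    · exact hx
    · exact hx.trans (List.rel_of_pairwise_cons hs hy)
  calc l.countP (· < x) = (l.take i).countP (· < x) + (l.drop i).countP (· < x) := by
        rw [← List.countP_append, List.take_append_drop]
    _ ≤ i := by
        rw [hdrop, add_zero]
        exact List.countP_le_length.trans (by simp)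

lemma card_lt_of_le_orderStat {N r : ℕ} {v : Fin N → ℝ} (hr : 1 ≤ r) (hrN : r ≤ N) {x : ℝ}
    (hx : x ≤ orderStat v r) : #{j | v j < x} < r := by
  set l := (List.ofFn v).mergeSort (fun x y => x ≤ y)
  have hi : r - 1 < l.length := by simp [l]; omega
  have hcount : l.countP (· < x) = #{j | v j < x} := by
    rw [List.Perm.countP_eq _ (List.mergeSort_perm _ _), List.ofFn_eq_map, List.countP_map,
      List.countP_eq_length_filter]
    rfl
  have hx' : x ≤ l[r - 1] := by rwa [orderStat, List.getD_eq_getElem _ _ hi] at hx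
  rw [← hcount]
  exact (countP_lt_le_of_le_getElem (List.pairwise_mergeSort' _ _) hi hx').trans_lt (by omega)

lemma rankOf_last_le_of_le_orderStat {N r : ℕ} {w : Fin (N + 1) → ℝ} (hw : Function.Injective w)
    (hr : 1 ≤ r) (hrN : r ≤ N) (h : w (Fin.last N) ≤ orderStat (fun j : Fin N => w j.castSucc) r) :
    rankOf w (Fin.last N) ≤ r := by
  have hlt := card_lt_of_le_orderStat hr hrN h
  have hle_iff : ∀ j : Fin N, w j.castSucc ≤ w (Fin.last N) ↔ w j.castSucc < w (Fin.last N) :=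
    fun j => (hw.ne (Fin.castSucc_lt_last j).ne).le_iff_lt
  have hsplit : rankOf w (Fin.last N) = #{j : Fin N | w j.castSucc < w (Fin.last N)} + 1 := by
    rw [rankOf, card_filter, card_filter, Fin.sum_univ_castSucc]
    simp only [hle_iff, le_refl, if_true]
  omega

section Probability

variable {Ω : Type*} [MeasurableSpace Ω] (P : Measure Ω)

lemma dTV_nonneg {γ : Type*} [MeasurableSpace γ] (U V : Ω → γ) : 0 ≤ dTV P U V :=
  Real.iSup_nonneg fun _ => abs_nonneg _

lemma measure_preimage_le_add_dTV [IsFiniteMeasure P] {γ : Type*} [MeasurableSpace γ]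
    (U V : Ω → γ) {E : Set γ} (hE : MeasurableSet E) :
    (P (U ⁻¹' E)).toReal ≤ (P (V ⁻¹' E)).toReal + dTV P U V := by
  have hle_univ (A : Set Ω) : (P A).toReal ≤ (P Set.univ).toReal :=
    ENNReal.toReal_mono (measure_ne_top _ _) (measure_mono (Set.subset_univ _))
  have hbdd : BddAbove (Set.range fun F : {F : Set γ // MeasurableSet F} =>
      |(P (U ⁻¹' F.1)).toReal - (P (V ⁻¹' F.1)).toReal|) := by
    refine ⟨(P Set.univ).toReal, ?_⟩
    rintro _ ⟨F, rfl⟩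
    have := hle_univ (U ⁻¹' F.1)
    have := hle_univ (V ⁻¹' F.1)
    exact abs_sub_le_iff.mpr ⟨by linarith [ENNReal.toReal_nonneg (a := P (V ⁻¹' F.1))],
      by linarith [ENNReal.toReal_nonneg (a := P (U ⁻¹' F.1))]⟩
  have hE_le : |(P (U ⁻¹' E)).toReal - (P (V ⁻¹' E)).toReal| ≤ dTV P U V := le_ciSup hbdd ⟨E, hE⟩
  linarith [le_abs_self ((P (U ⁻¹' E)).toReal - (P (V ⁻¹' E)).toReal)]

lemma avgSwitchCoef_nonneg {m : ℕ} (W : Ω → Fin m → ℝ) (τ : ℕ) : 0 ≤ avgSwitchCoef P W τ :=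
  div_nonneg (sum_nonneg fun _ _ => dTV_nonneg P _ _) (Nat.cast_nonneg _)

lemma measure_rankOf_last_le_le_add_switchCoef [IsFiniteMeasure P] {N : ℕ}
    (S : Ω → Fin (N + 1) → ℝ) (r : ℕ) {τ : ℕ} (hτ : τ ≤ N) (j : Fin (N + 1)) :
    (P {ω | rankOf (S ω) (Fin.last N) ≤ r}).toReal
      ≤ (P {ω | rankOf (S ω) j ≤ r + τ}).toReal + switchCoef P S (j + 1) τ := by
  set last : Fin (N + 1 - τ) := ⟨N + 1 - τ - 1, by omega⟩
  set E := {u : Fin (N + 1 - τ) → ℝ | rankOf u last ≤ r}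
  have hlast0 : delta0 (N + 1) (j + 1) τ id last = Fin.last N :=
    delta0_apply_last id (by omega) (by omega)
  have hlast1 : delta1 (N + 1) (j + 1) τ id last = j :=
    delta1_apply_last id (by omega) (by omega) (by omega)
  have hsub0 :
      {ω | rankOf (S ω) (Fin.last N) ≤ r} ⊆ (fun ω => delta0 (N + 1) (j + 1) τ (S ω)) ⁻¹' E := by
    intro ω hω
    change rankOf (delta0 (N + 1) (j + 1) τ (S ω)) last ≤ r
    rw [delta0_eq_comp]
    exact (rankOf_comp_le (delta0_id_injective _ _ _) _ _).trans (hlast0 ▸ hω)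
  have hsub1 : (fun ω => delta1 (N + 1) (j + 1) τ (S ω)) ⁻¹' E ⊆ {ω | rankOf (S ω) j ≤ r + τ} := by
    intro ω hω
    change rankOf (delta1 (N + 1) (j + 1) τ (S ω)) last ≤ r at hω
    rw [delta1_eq_comp] at hω
    have := rankOf_le_rankOf_comp_add (delta1_id_injective (N + 1) (j + 1) τ (by omega)) (S ω) last
    rw [hlast1] at this
    show rankOf (S ω) j ≤ r + τ
    omega
  calc (P {ω | rankOf (S ω) (Fin.last N) ≤ r}).toReal
      ≤ (P ((fun ω => delta0 (N + 1) (j + 1) τ (S ω)) ⁻¹' E)).toReal :=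
        ENNReal.toReal_mono (measure_ne_top _ _) (measure_mono hsub0)
    _ ≤ (P ((fun ω => delta1 (N + 1) (j + 1) τ (S ω)) ⁻¹' E)).toReal + switchCoef P S (j + 1) τ :=
        measure_preimage_le_add_dTV P _ _ (measurableSet_rankOf_le last r)
    _ ≤ _ := add_le_add_left (ENNReal.toReal_mono (measure_ne_top _ _) (measure_mono hsub1)) _

lemma sum_measure_rankOf_le_le [IsProbabilityMeasure P] {m : ℕ} {S : Ω → Fin m → ℝ}
    (hS : Measurable S) (hinj : ∀ᵐ ω ∂P, Function.Injective (S ω)) (t : ℕ) :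
    ∑ j, (P {ω | rankOf (S ω) j ≤ t}).toReal ≤ t := by
  have hmeas (j : Fin m) : MeasurableSet {ω | rankOf (S ω) j ≤ t} :=
    hS (measurableSet_rankOf_le j t)
  have hcount : ∀ᵐ ω ∂P, ∑ j, {ω | rankOf (S ω) j ≤ t}.indicator 1 ω ≤ (t : ℝ≥0∞) := by
    filter_upwards [hinj] with ω hω
    simp only [Set.indicator_apply, Set.mem_ofPred_eq, Pi.one_apply, sum_boole]
    exact_mod_cast card_filter_rankOf_le hω t
  have hsum : ∑ j, P {ω | rankOf (S ω) j ≤ t} ≤ t :=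
    calc ∑ j, P {ω | rankOf (S ω) j ≤ t}
        = ∫⁻ ω, ∑ j, {ω | rankOf (S ω) j ≤ t}.indicator 1 ω ∂P := by
          rw [lintegral_finsetSum _ fun j _ => measurable_one.indicator (hmeas j)]
          simp only [lintegral_indicator_one (hmeas _)]
      _ ≤ ∫⁻ _, (t : ℝ≥0∞) ∂P := lintegral_mono_ae hcount
      _ = t := by simp
  rw [← ENNReal.toReal_sum fun j _ => measure_ne_top P _]
  simpa using ENNReal.toReal_mono (by simp) hsum

theorem measure_le_orderStat_le [IsProbabilityMeasure P] {N : ℕ} {S : Ω → Fin (N + 1) → ℝ}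
    (hS : Measurable S) (hinj : ∀ᵐ ω ∂P, Function.Injective (S ω)) {r : ℕ} (hr : 1 ≤ r)
    (hrN : r ≤ N) (τ : ℕ) :
    (P {ω | S ω (Fin.last N) ≤ orderStat (fun j : Fin N => S ω j.castSucc) r}).toReal
      ≤ ((r : ℝ) + τ) / (N + 1) + avgSwitchCoef P S τ := by
  have hN : (0 : ℝ) < N + 1 := by positivity
  rcases lt_or_ge N τ with hτ | hτ
  · have hτ' : (N : ℝ) + 1 ≤ r + τ := by exact_mod_cast (by omega : N + 1 ≤ r + τ)
    calc _ ≤ (1 : ℝ) := ENNReal.toReal_le_of_le_ofReal zero_le_one (by simpa using prob_le_one)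
      _ ≤ ((r : ℝ) + τ) / (N + 1) := by rwa [one_le_div hN]
      _ ≤ _ := le_add_of_nonneg_right (avgSwitchCoef_nonneg P S τ)
  set p := (P {ω | rankOf (S ω) (Fin.last N) ≤ r}).toReal
  have hp : (P {ω | S ω (Fin.last N) ≤ orderStat (fun j : Fin N => S ω j.castSucc) r}).toReal ≤ p :=
    ENNReal.toReal_mono (measure_ne_top _ _) <| measure_mono_ae <| hinj.mono fun ω hω hle =>
      rankOf_last_le_of_le_orderStat hω hr hrN hle
  have hreindex : ∑ j : Fin (N + 1), switchCoef P S (j + 1) τ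
      = ∑ k ∈ Icc 1 (N + 1), switchCoef P S k τ := by
    rw [Fin.sum_univ_eq_sum_range (fun j => switchCoef P S (j + 1) τ), range_eq_Ico,
      sum_Ico_add' (fun k => switchCoef P S k τ), ← Ico_add_one_right_eq_Icc]
  have hsum : (N + 1) * p ≤ (r + τ) + ∑ k ∈ Icc 1 (N + 1), switchCoef P S k τ :=
    calc (N + 1) * p = ∑ _j : Fin (N + 1), p := by simp
      _ ≤ ∑ j : Fin (N + 1), ((P {ω | rankOf (S ω) j ≤ r + τ}).toReal + switchCoef P S (j + 1) τ) :=
        sum_le_sum fun j _ => measure_rankOf_last_le_le_add_switchCoef P S r hτ j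
      _ ≤ _ := by
        rw [sum_add_distrib, hreindex]
        exact_mod_cast add_le_add_left (sum_measure_rankOf_le_le P hS hinj (r + τ)) _
  calc _ ≤ p := hp
    _ ≤ ((r + τ) + ∑ k ∈ Icc 1 (N + 1), switchCoef P S k τ) / (N + 1) := by
        rw [le_div_iff₀ hN]; linarith
    _ = _ := by rw [avgSwitchCoef, add_div]; push_cast; ring

theorem measure_le_quantile_le [IsProbabilityMeasure P] {N : ℕ} (hN : 0 < N)
    {S : Ω → Fin (N + 1) → ℝ} (hS : Measurable S) (hinj : ∀ᵐ ω ∂P, Function.Injective (S ω))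
    {a : ℝ} (ha : a < 1) (τ : ℕ) :
    (P {ω | (S ω (Fin.last N) : EReal)
        ≤ Quantile ((1 - a) * (1 + 1 / (N : ℝ))) (fun j : Fin N => S ω j.castSucc)}).toReal
      ≤ ((⌈(1 - a) * ((N : ℝ) + 1)⌉ : ℤ) : ℝ) / ((N : ℝ) + 1)
        + ((τ : ℝ) / ((N : ℝ) + 1) + avgSwitchCoef P S τ) := by
  set b := (1 - a) * (1 + 1 / (N : ℝ))
  set c := ⌈(1 - a) * ((N : ℝ) + 1)⌉
  have hN' : (0 : ℝ) < N := by exact_mod_cast hN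
  have hb0 : 0 < b := mul_pos (by linarith) (by positivity)
  have hbN : b * N = (1 - a) * (N + 1) := by simp only [b]; field_simp
  have hc0 : 0 < c := Int.ceil_pos.mpr (by nlinarith)
  have hrest : 0 ≤ (τ : ℝ) / (N + 1) + avgSwitchCoef P S τ :=
    add_nonneg (by positivity) (avgSwitchCoef_nonneg P S τ)
  rcases lt_or_ge 1 b with hb | hb
  · have hc : (N : ℝ) + 1 ≤ c := by
      have : (N : ℤ) < c := Int.lt_ceil.mpr (by push_cast; nlinarith)
      exact_mod_cast this
    calc _ ≤ (1 : ℝ) := ENNReal.toReal_le_of_le_ofReal zero_le_one (by simpa using prob_le_one)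
      _ ≤ (c : ℝ) / (N + 1) := by rwa [one_le_div (by positivity)]
      _ ≤ _ := le_add_of_nonneg_right hrest
  · set r := c.toNat
    have hrc : (r : ℝ) = c := by exact_mod_cast Int.toNat_of_nonneg hc0.le
    have hrN : r ≤ N := by
      have : c ≤ N := Int.ceil_le.mpr (by push_cast; nlinarith)
      omega
    have hQ (v : Fin N → ℝ) : Quantile b v = orderStat v r := by
      rw [Quantile, if_neg hb.not_gt, if_neg hb0.not_ge, hbN]
    simp only [hQ, EReal.coe_le_coe_iff]
    refine (measure_le_orderStat_le P hS hinj (by omega) hrN τ).trans_eq ?_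
    rw [hrc]
    ring

end Probability

/-- Theorem 3: overcoverage upper bound under almost-surely distinct scores
(stated for each `τ`, equivalent to the `min` over `τ`). -/
theorem stmt13 {Ω α : Type*} [MeasurableSpace Ω] [MeasurableSpace α]
    (P : Measure Ω) [IsProbabilityMeasure P] {n L : ℕ} (hL : L < n)
    (Z : Ω → Fin (n + 1) → α) (hZ : Measurable Z)
    (s : (Fin (L + 1) → α) → ℝ) (hs : Measurable s)
    (hdist : ∀ᵐ ω ∂P, Function.Injective (fun j : Fin (n - L + 1) =>
        s fun l : Fin (L + 1) => Z ω ⟨L + j.val - l.val, by have := j.isLt; omega⟩))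
    (a : ℝ) (ha1 : a < 1) (τ : ℕ) :
    (P {ω | (s (fun l : Fin (L + 1) => Z ω ⟨n - l.val, by omega⟩) : EReal)
          ≤ Quantile ((1 - a) * (1 + 1 / ((n : ℝ) - L)))
              (fun j : Fin (n - L) =>
                s fun l : Fin (L + 1) =>
                  Z ω ⟨L + j.val - l.val, by have := j.isLt; omega⟩)}).toReal
      ≤ ((⌈(1 - a) * ((n : ℝ) - L + 1)⌉ : ℤ) : ℝ) / ((n : ℝ) - L + 1)
        + ((τ : ℝ) / ((n : ℝ) - L + 1)
          + avgSwitchCoef P (fun ω (j : Fin (n - L + 1)) =>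
              s fun l : Fin (L + 1) =>
                Z ω ⟨L + j.val - l.val, by have := j.isLt; omega⟩) τ) := by
  set S : Ω → Fin (n - L + 1) → ℝ := fun ω j =>
    s fun l : Fin (L + 1) => Z ω ⟨L + j.val - l.val, by have := j.isLt; omega⟩
  have hS : Measurable S := measurable_pi_lambda _ fun j =>
    hs.comp (measurable_pi_lambda _ fun l => (measurable_pi_apply _).comp hZ)
  have hlast (ω : Ω) : s (fun l : Fin (L + 1) => Z ω ⟨n - l.val, by omega⟩) = S ω (Fin.last _) := by
    congr! 3 with l
    rw [Fin.mk.injEq, Fin.val_last]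
    omega
  have hcast : (n : ℝ) - L = ((n - L : ℕ) : ℝ) := by rw [Nat.cast_sub hL.le]
  simp only [hlast, hcast]
  exact measure_le_quantile_le P (Nat.sub_pos_of_lt hL) hS hdist ha1 τ
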